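/- arXiv:2303.00695 — 2 statements merged into one kernel-verified Lean document; each statement's English description precedes it below -/
import Mathlib

section
/- For a zero-normalized, symmetric, superadditive TU game (N,v) and a graph Γ=(N,E), the position value of every node is non-negative: π_i(N,v,E) ≥ 0 for all i ∈ N. -/
open scoped Classical

noncomputable section

variable {V : Type*} [Fintype V] [DecidableEq V]

/-- The vertex set of the connected component of `i` in the graph with edge set `L`. -/
def comp (L : Finset (Sym2 V)) (i : V) : Finset V :=
  Finset.univ.filter fun j =>
    (SimpleGraph.fromEdgeSet (↑L : Set (Sym2 V))).Reachable i j

/-- Nodes covered by the edge set `L` (the node set `N[L]`). -/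
def covered (L : Finset (Sym2 V)) : Finset V :=
  Finset.univ.filter fun i => ∃ e ∈ L, i ∈ e

/-- The collection of (vertex sets of) connected components of the edge-induced
subgraph `Γ_L = (N[L], L)`. -/
def comps (L : Finset (Sym2 V)) : Finset (Finset V) :=
  (covered L).image (comp L)

/-- The link game `w^v` associated with the game `v` and an edge set. -/
def linkGame (v : Finset V → ℝ) (L : Finset (Sym2 V)) : ℝ :=
  ∑ C ∈ comps L, v C

/-- Shapley value of player `e` in the game `w` with player set `E`. -/
def shapley {α : Type*} [DecidableEq α] (E : Finset α) (w : Finset α → ℝ) (e : α) : ℝ :=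
  ∑ L ∈ (E.erase e).powerset,
    ((L.card.factorial : ℝ) * ((E.card - L.card - 1).factorial : ℝ) / (E.card.factorial : ℝ)) *
      (w (insert e L) - w L)

/-- Harsanyi dividend of coalition `L` in the game `w`. -/
def dividend {α : Type*} [DecidableEq α] (w : Finset α → ℝ) (L : Finset α) : ℝ :=
  ∑ T ∈ L.powerset, (-1 : ℝ) ^ (L.card - T.card) * w T

/-- The position value of node `i` in the communication situation `(N, v, E)`. -/
def positionValue (v : Finset V → ℝ) (E : Finset (Sym2 V)) (i : V) : ℝ :=
  (1 / 2) * ∑ e ∈ E.filter (fun e => i ∈ e), shapley E (linkGame v) e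

def Superadditive (v : Finset V → ℝ) : Prop :=
  ∀ S T : Finset V, Disjoint S T → v S + v T ≤ v (S ∪ T)

def ConvexGame (v : Finset V → ℝ) : Prop :=
  ∀ S T : Finset V, v S + v T ≤ v (S ∪ T) + v (S ∩ T)

def ZeroNormalized (v : Finset V → ℝ) : Prop :=
  v ∅ = 0 ∧ ∀ i : V, v {i} = 0

def SymmetricGame (v : Finset V → ℝ) (f : ℕ → ℝ) : Prop :=
  ∀ S : Finset V, v S = f S.card

/-- An edge set without loops. -/
def SimpleEdges (E : Finset (Sym2 V)) : Prop := ∀ e ∈ E, ¬ e.IsDiag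

/-- The edge-induced subgraph `Γ_L = (N[L], L)` is connected. -/
def EdgeConnected (L : Finset (Sym2 V)) : Prop :=
  ∀ i ∈ covered L, ∀ j ∈ covered L,
    (SimpleGraph.fromEdgeSet (↑L : Set (Sym2 V))).Reachable i j

/-- Component of `i` in the subgraph of `Γ_L` induced on the vertex set `S`. -/
def compIn (L : Finset (Sym2 V)) (S : Finset V) (i : V) : Finset V :=
  S.filter fun j =>
    (SimpleGraph.fromEdgeSet
      (↑(L.filter fun e => ∀ x ∈ e, x ∈ S) : Set (Sym2 V))).Reachable i j

/-- Number of connected components of the subgraph of `Γ_L` induced on `S`. -/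
def numCompsIn (L : Finset (Sym2 V)) (S : Finset V) : ℕ :=
  (S.image (compIn L S)).card

/-- A cutvertex of `Γ_L`: a vertex whose removal increases the number of components. -/
def IsCutvertex (L : Finset (Sym2 V)) (i : V) : Prop :=
  i ∈ covered L ∧ numCompsIn L (covered L) < numCompsIn L ((covered L).erase i)

/-- The set of cutedges of `L`: edges both of whose endpoints are cutvertices. -/
def cutedges (L : Finset (Sym2 V)) : Finset (Sym2 V) :=
  L.filter fun e => ∀ x ∈ e, IsCutvertex L x

/-- The attachment game `v_a(S) = 2(|S| - 1)` (and `v_a(∅) = 0`). -/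
def va : Finset V → ℝ := fun S => if S = ∅ then 0 else 2 * ((S.card : ℝ) - 1)

/-- The star on `V` with hub `c`: all (non-loop) edges incident to `c`. -/
def starEdges (c : V) : Finset (Sym2 V) :=
  Finset.univ.filter fun e => ¬ e.IsDiag ∧ c ∈ e

/-- The chain (path) on `Fin n`, with edges `{i, i+1}`. -/
def chainEdges (n : ℕ) : Finset (Sym2 (Fin n)) :=
  Finset.univ.filter fun e => ∃ i j : Fin n, e = s(i, j) ∧ (j : ℕ) = (i : ℕ) + 1

/-- `F(s, r) = ∑_{k=0}^{r} (-1)^k C(r,k) f(s-k)` for `f : ℕ → ℝ`. -/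
def Ffun (f : ℕ → ℝ) (s r : ℕ) : ℝ :=
  ∑ k ∈ Finset.range (r + 1), (-1 : ℝ) ^ k * (r.choose k : ℝ) * f (s - k)

/-- `F(s, r) = ∑_{k=0}^{r} (-1)^k C(r,k) f(s-k)` for `f : ℝ → ℝ`. -/
def FfunR (f : ℝ → ℝ) (s r : ℕ) : ℝ :=
  ∑ k ∈ Finset.range (r + 1), (-1 : ℝ) ^ k * (r.choose k : ℝ) * f ((s : ℝ) - (k : ℝ))


/-! ### Auxiliary lemmas for the proof -/

section AuxPV

open SimpleGraph

local notation "G" L => SimpleGraph.fromEdgeSet (↑L : Set (Sym2 V))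

lemma mem_comp_iff {L : Finset (Sym2 V)} {i j : V} :
    j ∈ comp L i ↔ (G L).Reachable i j := by
  simp [comp]

lemma self_mem_comp (L : Finset (Sym2 V)) (i : V) : i ∈ comp L i :=
  mem_comp_iff.2 (Reachable.refl _)

lemma comp_eq_comp_iff {L : Finset (Sym2 V)} {i j : V} :
    comp L i = comp L j ↔ (G L).Reachable i j := by
  constructor
  · intro h
    have : j ∈ comp L i := h ▸ self_mem_comp L j
    exact mem_comp_iff.1 this
  · intro h
    ext k
    simp only [mem_comp_iff]
    exact ⟨fun hk => h.symm.trans hk, fun hk => h.trans hk⟩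

lemma mem_covered_iff {L : Finset (Sym2 V)} {i : V} :
    i ∈ covered L ↔ ∃ e ∈ L, i ∈ e := by
  simp [covered]

lemma eq_of_not_covered {L : Finset (Sym2 V)} {a j : V} (ha : a ∉ covered L)
    (h : (G L).Reachable a j) : j = a := by
  obtain ⟨w⟩ := h
  cases w with
  | nil => rfl
  | cons hadj p =>
    rw [SimpleGraph.fromEdgeSet_adj] at hadj
    exact absurd (mem_covered_iff.2 ⟨_, hadj.1, Sym2.mem_mk_left _ _⟩) ha

lemma comp_of_not_covered {L : Finset (Sym2 V)} {a : V} (ha : a ∉ covered L) :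
    comp L a = {a} := by
  ext j
  simp only [mem_comp_iff, Finset.mem_singleton]
  exact ⟨fun h => eq_of_not_covered ha h, fun h => h ▸ Reachable.refl _⟩

lemma comp_mem_comps {L : Finset (Sym2 V)} {a : V} (ha : a ∈ covered L) :
    comp L a ∈ comps L := Finset.mem_image_of_mem _ ha

lemma comp_notMem_comps {L : Finset (Sym2 V)} {a : V} (ha : a ∉ covered L) :
    comp L a ∉ comps L := by
  intro h
  obtain ⟨i, hi, hic⟩ := Finset.mem_image.1 h
  have : i ∈ comp L a := hic ▸ self_mem_comp L i
  rw [comp_of_not_covered ha, Finset.mem_singleton] at this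
  exact ha (this ▸ hi)

lemma fromEdgeSet_insert_eq {L : Finset (Sym2 V)} {a b : V} :
    SimpleGraph.fromEdgeSet (↑(insert s(a, b) L) : Set (Sym2 V)) =
      (G L) ⊔ SimpleGraph.edge a b := by
  ext x y
  simp only [SimpleGraph.fromEdgeSet_adj, Finset.coe_insert, Set.mem_insert_iff,
    SimpleGraph.sup_adj, SimpleGraph.edge_adj, Finset.mem_coe, Sym2.eq_iff]
  tauto

lemma reach_sup_edge {G' : SimpleGraph V} {a b i j : V}
    (h : (G' ⊔ SimpleGraph.edge a b).Reachable i j) :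
    G'.Reachable i j ∨ (G'.Reachable i a ∧ G'.Reachable b j) ∨
      (G'.Reachable i b ∧ G'.Reachable a j) := by
  obtain ⟨w⟩ := h
  induction w with
  | nil => exact Or.inl (Reachable.refl _)
  | @cons u x j hadj p ih =>
    rcases hadj with hG | hE
    · have hux : G'.Reachable u x := hG.reachable
      rcases ih with h1 | ⟨h1, h2⟩ | ⟨h1, h2⟩
      · exact Or.inl (hux.trans h1)
      · exact Or.inr (Or.inl ⟨hux.trans h1, h2⟩)
      · exact Or.inr (Or.inr ⟨hux.trans h1, h2⟩)
    · rw [SimpleGraph.edge_adj] at hE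
      obtain ⟨⟨rfl, rfl⟩ | ⟨rfl, rfl⟩, hne⟩ := hE
      · rcases ih with h1 | ⟨h1, h2⟩ | ⟨h1, h2⟩
        · exact Or.inr (Or.inl ⟨Reachable.refl _, h1⟩)
        · exact Or.inl (h1.symm.trans h2)
        · exact Or.inl h2
      · rcases ih with h1 | ⟨h1, h2⟩ | ⟨h1, h2⟩
        · exact Or.inr (Or.inr ⟨Reachable.refl _, h1⟩)
        · exact Or.inl h2
        · exact Or.inr (Or.inr ⟨Reachable.refl _, h2⟩)

lemma reach_insert_iff {L : Finset (Sym2 V)} {a b : V} (hab : a ≠ b) (i j : V) :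
    (SimpleGraph.fromEdgeSet (↑(insert s(a, b) L) : Set (Sym2 V))).Reachable i j ↔
      (G L).Reachable i j ∨ ((G L).Reachable i a ∧ (G L).Reachable b j) ∨
        ((G L).Reachable i b ∧ (G L).Reachable a j) := by
  rw [fromEdgeSet_insert_eq]
  constructor
  · exact reach_sup_edge
  · have hab' : ((G L) ⊔ SimpleGraph.edge a b).Reachable a b := by
      refine Adj.reachable ?_
      exact Or.inr ((SimpleGraph.edge_adj a b a b).2 ⟨Or.inl ⟨rfl, rfl⟩, hab⟩)
    have hmono : ∀ x y : V, (G L).Reachable x y →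
        ((G L) ⊔ SimpleGraph.edge a b).Reachable x y := fun x y h =>
      h.mono le_sup_left
    rintro (h | ⟨h1, h2⟩ | ⟨h1, h2⟩)
    · exact hmono _ _ h
    · exact ((hmono _ _ h1).trans hab').trans (hmono _ _ h2)
    · exact ((hmono _ _ h1).trans hab'.symm).trans (hmono _ _ h2)

lemma covered_insert {L : Finset (Sym2 V)} {a b : V} :
    covered (insert s(a, b) L) = insert a (insert b (covered L)) := by
  ext i
  simp only [mem_covered_iff, Finset.mem_insert]
  constructor
  · rintro ⟨e, (rfl | he), hie⟩
    · rcases Sym2.mem_iff.1 hie with rfl | rfl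
      · exact Or.inl rfl
      · exact Or.inr (Or.inl rfl)
    · exact Or.inr (Or.inr ⟨e, he, hie⟩)
  · rintro (h | h | ⟨e, he, hie⟩)
    · exact ⟨s(a, b), Or.inl rfl, by rw [h]; exact Sym2.mem_mk_left a b⟩
    · exact ⟨s(a, b), Or.inl rfl, by rw [h]; exact Sym2.mem_mk_right a b⟩
    · exact ⟨e, Or.inr he, hie⟩

lemma disjoint_comp {L : Finset (Sym2 V)} {a b : V}
    (h : ¬ (G L).Reachable a b) : Disjoint (comp L a) (comp L b) := by
  rw [Finset.disjoint_left]
  intro j hja hjb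
  exact h ((mem_comp_iff.1 hja).trans (mem_comp_iff.1 hjb).symm)

/-- If the endpoints of the new edge are already connected, components don't change. -/
lemma comps_insert_of_reachable {L : Finset (Sym2 V)} {a b : V} (hab : a ≠ b)
    (hr : (G L).Reachable a b) : comps (insert s(a, b) L) = comps L := by
  have hreach : ∀ i j : V,
      (SimpleGraph.fromEdgeSet (↑(insert s(a, b) L) : Set (Sym2 V))).Reachable i j ↔
        (G L).Reachable i j := by
    intro i j
    rw [reach_insert_iff hab]
    constructor
    · rintro (h | ⟨h1, h2⟩ | ⟨h1, h2⟩)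
      · exact h
      · exact (h1.trans hr).trans h2
      · exact (h1.trans hr.symm).trans h2
    · exact Or.inl
  have hcomp : comp (insert s(a, b) L) = comp L := by
    funext i
    ext j
    simp only [mem_comp_iff, hreach]
  have hacov : a ∈ covered L := by
    by_contra ha
    exact hab ((eq_of_not_covered ha hr).symm)
  have hbcov : b ∈ covered L := by
    by_contra hb
    exact hab (eq_of_not_covered hb hr.symm)
  have hcov : covered (insert s(a, b) L) = covered L := by
    rw [covered_insert, Finset.insert_eq_of_mem hbcov, Finset.insert_eq_of_mem hacov]
  unfold comps
  rw [hcov, hcomp]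

/-- If the endpoints are not connected, adding the edge merges the two components. -/
lemma comps_insert_of_not_reachable {L : Finset (Sym2 V)} {a b : V} (hab : a ≠ b)
    (hr : ¬ (G L).Reachable a b) :
    comps (insert s(a, b) L) =
      insert (comp L a ∪ comp L b) (((comps L).erase (comp L a)).erase (comp L b)) := by
  set A := comp L a with hA
  set B := comp L b with hB
  have hcompAB : ∀ i : V, (G L).Reachable i a ∨ (G L).Reachable i b →
      comp (insert s(a, b) L) i = A ∪ B := by
    intro i hi
    ext j
    simp only [mem_comp_iff, reach_insert_iff hab, Finset.mem_union, hA, hB]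
    rcases hi with hia | hib
    · constructor
      · rintro (h | ⟨h1, h2⟩ | ⟨h1, h2⟩)
        · exact Or.inl (hia.symm.trans h)
        · exact Or.inr h2
        · exact absurd (hia.symm.trans h1) hr
      · rintro (h | h)
        · exact Or.inl (hia.trans h)
        · exact Or.inr (Or.inl ⟨hia, h⟩)
    · constructor
      · rintro (h | ⟨h1, h2⟩ | ⟨h1, h2⟩)
        · exact Or.inr (hib.symm.trans h)
        · exact absurd (hib.symm.trans h1).symm hr
        · exact Or.inl h2
      · rintro (h | h)
        · exact Or.inr (Or.inr ⟨hib, h⟩)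
        · exact Or.inl (hib.trans h)
  have hcompOther : ∀ i : V, ¬ (G L).Reachable i a → ¬ (G L).Reachable i b →
      comp (insert s(a, b) L) i = comp L i := by
    intro i hia hib
    ext j
    simp only [mem_comp_iff, reach_insert_iff hab]
    constructor
    · rintro (h | ⟨h1, h2⟩ | ⟨h1, h2⟩)
      · exact h
      · exact absurd h1 hia
      · exact absurd h1 hib
    · exact Or.inl
  ext C
  simp only [comps, Finset.mem_image, covered_insert, Finset.mem_insert, Finset.mem_erase]
  constructor
  · rintro ⟨i, hi, rfl⟩
    by_cases hia : (G L).Reachable i a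
    · exact Or.inl (hcompAB i (Or.inl hia))
    by_cases hib : (G L).Reachable i b
    · exact Or.inl (hcompAB i (Or.inr hib))
    · rcases hi with rfl | rfl | hi
      · exact absurd (Reachable.refl _) hia
      · exact absurd (Reachable.refl _) hib
      · refine Or.inr ⟨?_, ?_, ⟨i, hi, (hcompOther i hia hib).symm⟩⟩
        · intro h
          rw [hcompOther i hia hib] at h
          exact hib (comp_eq_comp_iff.1 h)
        · intro h
          rw [hcompOther i hia hib] at h
          exact hia (comp_eq_comp_iff.1 h)
  · rintro (rfl | ⟨hCB, hCA, ⟨i, hi, rfl⟩⟩)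
    · exact ⟨a, Or.inl rfl, hcompAB a (Or.inl (Reachable.refl _))⟩
    · have hia : ¬ (G L).Reachable i a := fun h => hCA (comp_eq_comp_iff.2 h)
      have hib : ¬ (G L).Reachable i b := fun h => hCB (comp_eq_comp_iff.2 h)
      exact ⟨i, Or.inr (Or.inr hi), hcompOther i hia hib⟩

/-- The key marginal-contribution inequality. -/
lemma linkGame_mono_insert (v : Finset V → ℝ) (hzn : ZeroNormalized v)
    (hsup : Superadditive v) (L : Finset (Sym2 V)) (e : Sym2 V) (he : ¬ e.IsDiag) :
    linkGame v L ≤ linkGame v (insert e L) := by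
  by_cases heL : e ∈ L
  · rw [Finset.insert_eq_self.2 heL]
  induction e using Sym2.ind with
  | _ a b =>
  have hab : a ≠ b := by
    intro h
    exact he (by simp [h, Sym2.isDiag_iff_proj_eq])
  by_cases hr : (G L).Reachable a b
  · unfold linkGame
    rw [comps_insert_of_reachable hab hr]
  · set A := comp L a with hA
    set B := comp L b with hB
    have hdAB : Disjoint A B := disjoint_comp hr
    have haA : a ∈ A := self_mem_comp L a
    have hbB : b ∈ B := self_mem_comp L b
    have hAB : A ≠ B := by
      intro h
      exact (Finset.disjoint_left.1 hdAB) haA (h ▸ haA)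
    have hABnot : A ∪ B ∉ ((comps L).erase A).erase B := by
      intro h
      obtain ⟨i, hi, hic⟩ := Finset.mem_image.1 (Finset.mem_of_mem_erase
        (Finset.mem_of_mem_erase h))
      have hii : i ∈ A ∪ B := hic ▸ self_mem_comp L i
      rcases Finset.mem_union.1 hii with hiA | hiB
      · have : comp L i = A := comp_eq_comp_iff.2 (mem_comp_iff.1 hiA).symm
        exact (Finset.mem_erase.1 (Finset.mem_of_mem_erase h)).1 (hic ▸ this ▸ rfl)
      · have : comp L i = B := comp_eq_comp_iff.2 (mem_comp_iff.1 hiB).symm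
        exact (Finset.mem_erase.1 h).1 (hic ▸ this ▸ rfl)
    have hsumL : linkGame v L = v A + v B + ∑ C ∈ ((comps L).erase A).erase B, v C := by
      have hvA : (if A ∈ comps L then v A else 0) = v A := by
        by_cases hc : a ∈ covered L
        · rw [if_pos (comp_mem_comps hc)]
        · rw [if_neg (comp_notMem_comps hc), hA, comp_of_not_covered hc, hzn.2 a]
      have hvB' : B ∈ (comps L).erase A ↔ B ∈ comps L :=
        ⟨Finset.mem_of_mem_erase, fun h => Finset.mem_erase.2 ⟨hAB.symm, h⟩⟩
      have hvB : (if B ∈ comps L then v B else 0) = v B := by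
        by_cases hc : b ∈ covered L
        · rw [if_pos (comp_mem_comps hc)]
        · rw [if_neg (comp_notMem_comps hc), hB, comp_of_not_covered hc, hzn.2 b]
      have h1 : ∑ C ∈ (comps L).erase A, v C =
          (if B ∈ comps L then v B else 0) + ∑ C ∈ ((comps L).erase A).erase B, v C := by
        by_cases hBc : B ∈ comps L
        · rw [if_pos hBc, ← Finset.add_sum_erase _ _ (hvB'.2 hBc)]
        · rw [if_neg hBc, zero_add,
            Finset.erase_eq_of_notMem (fun h => hBc (hvB'.1 h))]
      have h2 : ∑ C ∈ comps L, v C =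
          (if A ∈ comps L then v A else 0) + ∑ C ∈ (comps L).erase A, v C := by
        by_cases hAc : A ∈ comps L
        · rw [if_pos hAc, ← Finset.add_sum_erase _ _ hAc]
        · rw [if_neg hAc, zero_add, Finset.erase_eq_of_notMem hAc]
      unfold linkGame
      rw [h2, h1, hvA, hvB, add_assoc]
    have hsumL' : linkGame v (insert s(a, b) L) =
        v (A ∪ B) + ∑ C ∈ ((comps L).erase A).erase B, v C := by
      unfold linkGame
      rw [comps_insert_of_not_reachable hab hr, Finset.sum_insert hABnot]
    rw [hsumL, hsumL']
    have := hsup A B hdAB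
    linarith

end AuxPV

/-- the position value of a zero-normalized symmetric superadditive
game is non-negative at every node. -/
theorem position_value_nonneg (v : Finset V → ℝ) (f : ℕ → ℝ)
    (hsym : SymmetricGame v f) (hzn : ZeroNormalized v) (hsup : Superadditive v)
    (E : Finset (Sym2 V)) (hE : SimpleEdges E) (i : V) :
    0 ≤ positionValue v E i := by
  unfold positionValue
  refine mul_nonneg (by norm_num) (Finset.sum_nonneg fun e he => ?_)
  have heE : e ∈ E := (Finset.mem_filter.1 he).1
  unfold shapley
  refine Finset.sum_nonneg fun L hL => ?_
  refine mul_nonneg (div_nonneg (mul_nonneg ?_ ?_) ?_) ?_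
  · positivity
  · positivity
  · positivity
  · rw [sub_nonneg]
    exact linkGame_mono_insert v hzn hsup L e (hE e heE)

end
end

section
/- The position value satisfies locality: for every zero-normalized symmetric superadditive game (N,v), graph (N,E), and node i, π_i(N,v,E) = π_i(K_i(E), v restricted to K_i(E), E[K_i(E)]), where K_i(E) is the connected component of (N,E) containing i. -/
open scoped Classical

noncomputable section

variable {V : Type*} [Fintype V] [DecidableEq V]

section LocalityHelpers

open SimpleGraph

lemma pv_reach_of_homog (p : V → Prop) (L M : Finset (Sym2 V))
    (hL : ∀ e ∈ L, (∀ x ∈ e, p x) ∨ (∀ x ∈ e, ¬ p x))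
    (hM : ∀ e ∈ L, (∀ x ∈ e, p x) → e ∈ M) :
    ∀ {j k : V}, (fromEdgeSet (↑L : Set (Sym2 V))).Walk j k → p j →
      (fromEdgeSet (↑M : Set (Sym2 V))).Reachable j k := by
  intro j k w
  induction w with
  | nil => intro _; exact Reachable.refl _
  | @cons a b c h w ih =>
    intro hpa
    rw [SimpleGraph.fromEdgeSet_adj] at h
    have heL : s(a, b) ∈ L := h.1
    have hall : ∀ x ∈ s(a, b), p x := by
      rcases hL _ heL with h1 | h2
      · exact h1
      · exact absurd hpa (h2 a (by simp))
    have hpb : p b := hall b (by simp)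
    have hadj : (fromEdgeSet (↑M : Set (Sym2 V))).Adj a b := by
      rw [SimpleGraph.fromEdgeSet_adj]
      exact ⟨hM _ heL hall, h.2⟩
    exact hadj.reachable.trans (ih hpb)

lemma pv_mem_covered_of_reachable (L : Finset (Sym2 V)) {a b : V}
    (h : (fromEdgeSet (↑L : Set (Sym2 V))).Reachable a b) :
    a = b ∨ b ∈ covered L := by
  obtain ⟨w⟩ := h
  induction w with
  | nil => exact Or.inl rfl
  | @cons a c b h w ih =>
    rcases ih with rfl | hb
    · rw [SimpleGraph.fromEdgeSet_adj] at h
      refine Or.inr ?_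
      simp only [covered, Finset.mem_filter, Finset.mem_univ, true_and]
      exact ⟨s(a, c), by exact_mod_cast h.1, by simp⟩
    · exact Or.inr hb

lemma pv_mem_comp_iff (L : Finset (Sym2 V)) (i j : V) :
    j ∈ comp L i ↔ (fromEdgeSet (↑L : Set (Sym2 V))).Reachable i j := by
  simp [comp]

lemma pv_mem_covered_iff (L : Finset (Sym2 V)) (j : V) :
    j ∈ covered L ↔ ∃ e ∈ L, j ∈ e := by
  simp [covered]

lemma pv_comp_eq_of_homog (p : V → Prop) (L : Finset (Sym2 V))
    (hL : ∀ e ∈ L, (∀ x ∈ e, p x) ∨ (∀ x ∈ e, ¬ p x)) {j : V} (hj : p j) :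
    comp L j = comp (L.filter fun e => ∀ x ∈ e, p x) j := by
  ext k
  rw [pv_mem_comp_iff, pv_mem_comp_iff]
  constructor
  · intro ⟨w⟩
    exact pv_reach_of_homog p L _ hL (fun e he hall => Finset.mem_filter.mpr ⟨he, hall⟩) w hj
  · intro h
    exact h.mono (SimpleGraph.fromEdgeSet_mono (by exact_mod_cast L.filter_subset _))

lemma pv_comp_eq_of_homog_not (p : V → Prop) (L : Finset (Sym2 V))
    (hL : ∀ e ∈ L, (∀ x ∈ e, p x) ∨ (∀ x ∈ e, ¬ p x)) {j : V} (hj : ¬ p j) :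
    comp L j = comp (L.filter fun e => ∀ x ∈ e, ¬ p x) j := by
  ext k
  rw [pv_mem_comp_iff, pv_mem_comp_iff]
  constructor
  · intro ⟨w⟩
    refine pv_reach_of_homog (fun x => ¬ p x) L _ ?_
      (fun e he hall => Finset.mem_filter.mpr ⟨he, hall⟩) w hj
    intro e he
    rcases hL e he with h | h
    · exact Or.inr fun x hx => not_not_intro (h x hx)
    · exact Or.inl h
  · intro h
    exact h.mono (SimpleGraph.fromEdgeSet_mono (by exact_mod_cast L.filter_subset _))

lemma pv_linkGame_split (v : Finset V → ℝ) (p : V → Prop) (L : Finset (Sym2 V))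
    (hL : ∀ e ∈ L, (∀ x ∈ e, p x) ∨ (∀ x ∈ e, ¬ p x)) :
    linkGame v L = linkGame v (L.filter fun e => ∀ x ∈ e, p x)
                 + linkGame v (L.filter fun e => ∀ x ∈ e, ¬ p x) := by
  have hpA : ∀ j ∈ covered (L.filter fun e => ∀ x ∈ e, p x), p j := by
    intro j hj
    rw [pv_mem_covered_iff] at hj
    obtain ⟨e, he, hje⟩ := hj
    rw [Finset.mem_filter] at he
    exact he.2 j hje
  have hpB : ∀ j ∈ covered (L.filter fun e => ∀ x ∈ e, ¬ p x), ¬ p j := by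
    intro j hj
    rw [pv_mem_covered_iff] at hj
    obtain ⟨e, he, hje⟩ := hj
    rw [Finset.mem_filter] at he
    exact he.2 j hje
  have hcov : covered L = covered (L.filter fun e => ∀ x ∈ e, p x)
      ∪ covered (L.filter fun e => ∀ x ∈ e, ¬ p x) := by
    ext j
    simp only [pv_mem_covered_iff, Finset.mem_union]
    constructor
    · rintro ⟨e, he, hje⟩
      rcases hL e he with h | h
      · exact Or.inl ⟨e, Finset.mem_filter.mpr ⟨he, h⟩, hje⟩
      · exact Or.inr ⟨e, Finset.mem_filter.mpr ⟨he, h⟩, hje⟩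
    · rintro (⟨e, he, hje⟩ | ⟨e, he, hje⟩)
      · exact ⟨e, Finset.mem_of_mem_filter e he, hje⟩
      · exact ⟨e, Finset.mem_of_mem_filter e he, hje⟩
  have hcomps : comps L = comps (L.filter fun e => ∀ x ∈ e, p x)
      ∪ comps (L.filter fun e => ∀ x ∈ e, ¬ p x) := by
    rw [comps, hcov, Finset.image_union, comps, comps]
    congr 1
    · exact Finset.image_congr fun j hj => pv_comp_eq_of_homog p L hL (hpA j hj)
    · exact Finset.image_congr fun j hj => pv_comp_eq_of_homog_not p L hL (hpB j hj)
  have hdisj : Disjoint (comps (L.filter fun e => ∀ x ∈ e, p x))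
      (comps (L.filter fun e => ∀ x ∈ e, ¬ p x)) := by
    rw [Finset.disjoint_left]
    intro C hCA hCB
    rw [comps, Finset.mem_image] at hCA hCB
    obtain ⟨j, hj, rfl⟩ := hCA
    obtain ⟨j', hj', hC⟩ := hCB
    have hjj : j ∈ comp (L.filter fun e => ∀ x ∈ e, ¬ p x) j' := by
      rw [hC, pv_mem_comp_iff]
    rw [pv_mem_comp_iff] at hjj
    rcases pv_mem_covered_of_reachable _ hjj with h | hmem
    · rw [h] at hj'
      exact hpB j hj' (hpA j hj)
    · exact hpB j hmem (hpA j hj)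
  rw [linkGame, hcomps, Finset.sum_union hdisj]; rfl

lemma pv_linkGame_split' (v : Finset V → ℝ) (p : V → Prop) (L LA LB : Finset (Sym2 V))
    (hL : ∀ e ∈ L, (∀ x ∈ e, p x) ∨ (∀ x ∈ e, ¬ p x))
    (hA : ∀ e, e ∈ LA ↔ e ∈ L ∧ ∀ x ∈ e, p x)
    (hB : ∀ e, e ∈ LB ↔ e ∈ L ∧ ∀ x ∈ e, ¬ p x) :
    linkGame v L = linkGame v LA + linkGame v LB := by
  have h1 : LA = L.filter (fun e => ∀ x ∈ e, p x) := by
    ext e; rw [hA e, Finset.mem_filter]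
  have h2 : LB = L.filter (fun e => ∀ x ∈ e, ¬ p x) := by
    ext e; rw [hB e, Finset.mem_filter]
  rw [h1, h2]
  exact pv_linkGame_split v p L hL

lemma pv_coeff_identity (n m : ℕ) (h : m + 2 ≤ n) :
    (m.factorial : ℝ) * ((n - m - 1).factorial : ℝ) / (n.factorial : ℝ)
      + ((m + 1).factorial : ℝ) * ((n - (m + 1) - 1).factorial : ℝ) / (n.factorial : ℝ)
    = (m.factorial : ℝ) * (((n - 1) - m - 1).factorial : ℝ) / ((n - 1).factorial : ℝ) := by
  have h1 : n - m - 1 = (n - m - 2) + 1 := by omega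
  have h2 : n - (m + 1) - 1 = n - m - 2 := by omega
  have h3 : (n - 1) - m - 1 = n - m - 2 := by omega
  have h4 : n = (n - 1) + 1 := by omega
  have e1 : ((n - m - 1).factorial : ℝ)
      = (((n - m - 2 : ℕ) : ℝ) + 1) * ((n - m - 2).factorial : ℝ) := by
    rw [h1, Nat.factorial_succ]; push_cast; ring
  have e2 : ((n - (m + 1) - 1).factorial : ℝ) = ((n - m - 2).factorial : ℝ) := by rw [h2]
  have e3 : (((n - 1) - m - 1).factorial : ℝ) = ((n - m - 2).factorial : ℝ) := by rw [h3]
  have e4 : (n.factorial : ℝ) = (((n - 1 : ℕ) : ℝ) + 1) * ((n - 1).factorial : ℝ) := by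
    conv_lhs => rw [h4]
    rw [Nat.factorial_succ]; push_cast; ring
  have e5 : (((m + 1).factorial : ℕ) : ℝ) = ((m : ℝ) + 1) * (m.factorial : ℝ) := by
    rw [Nat.factorial_succ]; push_cast; ring
  have hf1 : ((n - 1).factorial : ℝ) ≠ 0 := Nat.cast_ne_zero.mpr (Nat.factorial_ne_zero _)
  have hf2 : ((n - 1 : ℕ) : ℝ) + 1 ≠ 0 := by positivity
  have key : ((n - m - 2 : ℕ) : ℝ) + 1 + ((m : ℝ) + 1) = ((n - 1 : ℕ) : ℝ) + 1 := by
    have : (n - m - 2) + 1 + (m + 1) = (n - 1) + 1 := by omega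
    exact_mod_cast this
  rw [e1, e2, e3, e4, e5]
  field_simp
  linear_combination key

lemma pv_shapley_erase_null {α : Type*} [DecidableEq α] (E : Finset α) (w : Finset α → ℝ)
    (e p : α) (he : e ∈ E) (hp : p ∈ E) (hpe : p ≠ e)
    (hnull : ∀ L, w (insert p L) = w L) :
    shapley E w e = shapley (E.erase p) w e := by
  have hpE : p ∈ E.erase e := Finset.mem_erase.mpr ⟨hpe, hp⟩
  have hS : E.erase e = insert p ((E.erase e).erase p) := (Finset.insert_erase hpE).symm
  have hpS : p ∉ (E.erase e).erase p := Finset.notMem_erase _ _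
  have hcomm : (E.erase p).erase e = (E.erase e).erase p := Finset.erase_right_comm
  have hcardE : 2 ≤ E.card := by
    have := Finset.one_lt_card.mpr ⟨p, hp, e, he, hpe⟩
    omega
  have hcardEp : (E.erase p).card = E.card - 1 := Finset.card_erase_of_mem hp
  rw [shapley, hS, Finset.sum_powerset_insert hpS, shapley, hcomm]
  rw [← Finset.sum_add_distrib]
  apply Finset.sum_congr rfl
  intro L hL
  rw [Finset.mem_powerset] at hL
  have hpL : p ∉ L := fun h => hpS (hL h)
  have hcard : (insert p L).card = L.card + 1 := Finset.card_insert_of_notMem hpL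
  have hmarg : w (insert e (insert p L)) - w (insert p L) = w (insert e L) - w L := by
    rw [Finset.insert_comm, hnull, hnull]
  have hmLe : L.card + 2 ≤ E.card := by
    have h1 := Finset.card_le_card hL
    have h2 : ((E.erase e).erase p).card = E.card - 2 := by
      rw [Finset.card_erase_of_mem hpE, Finset.card_erase_of_mem he]; omega
    omega
  rw [hmarg, hcard, hcardEp, ← add_mul, pv_coeff_identity E.card L.card hmLe]

lemma pv_shapley_null_subset {α : Type*} [DecidableEq α] :
    ∀ (n : ℕ) (E E' : Finset α) (w : Finset α → ℝ) (e : α), (E \ E').card = n →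
      E' ⊆ E → e ∈ E' →
      (∀ p ∈ E, p ∉ E' → ∀ L : Finset α, w (insert p L) = w L) →
      shapley E w e = shapley E' w e := by
  intro n
  induction n with
  | zero =>
    intro E E' w e hcard hsub he hnull
    have : E = E' := Finset.Subset.antisymm
      (fun x hx => by
        by_contra hx'
        exact absurd (Finset.card_eq_zero.mp hcard ▸ Finset.mem_sdiff.mpr ⟨hx, hx'⟩)
          (Finset.notMem_empty x)) hsub
    rw [this]
  | succ n ih =>
    intro E E' w e hcard hsub he hnull
    have hne : E \ E' ≠ ∅ := by
      intro h; rw [h] at hcard; simp at hcard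
    obtain ⟨q, hq⟩ := Finset.nonempty_of_ne_empty hne
    rw [Finset.mem_sdiff] at hq
    have hqe : q ≠ e := fun h => hq.2 (h ▸ he)
    rw [pv_shapley_erase_null E w e q (hsub he) hq.1 hqe (hnull q hq.1 hq.2)]
    apply ih (E.erase q) E' w e
    · rw [Finset.erase_sdiff_comm]
      rw [Finset.card_erase_of_mem (Finset.mem_sdiff.mpr hq), hcard]
      omega
    · intro x hx
      exact Finset.mem_erase.mpr ⟨fun h => hq.2 (h ▸ hx), hsub hx⟩
    · exact he
    · intro p hp hp' L
      exact hnull p (Finset.mem_of_mem_erase hp) hp' L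

end LocalityHelpers

/-- locality of the position value: the position value of a node only
depends on the edges inside the connected component of that node. -/
theorem position_value_locality (v : Finset V → ℝ) (f : ℕ → ℝ)
    (hsym : SymmetricGame v f) (hzn : ZeroNormalized v) (hsup : Superadditive v)
    (E : Finset (Sym2 V)) (hE : SimpleEdges E) (i : V) :
    positionValue v E i =
      positionValue v (E.filter fun e => ∀ x ∈ e, x ∈ comp E i) i := by
  have hicomp : i ∈ comp E i := by
    rw [pv_mem_comp_iff]
  have step : ∀ a b : V, s(a, b) ∈ E → a ∈ comp E i → b ∈ comp E i := by
    intro a b heab ha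
    have hd : a ≠ b := by
      intro h
      exact hE _ heab (by rw [h]; exact Sym2.mk_isDiag_iff.mpr rfl)
    have hadj : (SimpleGraph.fromEdgeSet (↑E : Set (Sym2 V))).Adj a b := by
      rw [SimpleGraph.fromEdgeSet_adj]
      exact ⟨heab, hd⟩
    rw [pv_mem_comp_iff] at ha ⊢
    exact ha.trans hadj.reachable
  have homog : ∀ e ∈ E, (∀ x ∈ e, x ∈ comp E i) ∨ (∀ x ∈ e, ¬ x ∈ comp E i) := by
    intro e he
    induction e using Sym2.inductionOn with
    | hf a b =>
      by_cases ha : a ∈ comp E i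
      · left
        intro x hx
        rcases Sym2.mem_iff.mp hx with rfl | rfl
        · exact ha
        · exact step a x he ha
      · right
        intro x hx hxc
        rcases Sym2.mem_iff.mp hx with rfl | rfl
        · exact ha hxc
        · exact ha (step x a (by rwa [Sym2.eq_swap] at he) hxc)
  have homogsub : ∀ M : Finset (Sym2 V), M ⊆ E →
      ∀ e ∈ M, (∀ x ∈ e, x ∈ comp E i) ∨ (∀ x ∈ e, ¬ x ∈ comp E i) :=
    fun M hM e he => homog e (hM he)
  have hpedge : ∀ e ∈ E, i ∈ e → ∀ x ∈ e, x ∈ comp E i := by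
    intro e he hie
    rcases homog e he with h | h
    · exact h
    · exact absurd hicomp (h i hie)
  have hfilter : (E.filter fun e => ∀ x ∈ e, x ∈ comp E i).filter (fun e => i ∈ e)
      = E.filter (fun e => i ∈ e) := by
    rw [Finset.filter_filter]
    apply Finset.filter_congr
    intro e he
    constructor
    · intro h; exact h.2
    · intro h; exact ⟨hpedge e he h, h⟩
  rw [positionValue, positionValue, hfilter]
  congr 1
  apply Finset.sum_congr rfl
  intro e hei
  rw [Finset.mem_filter] at hei
  obtain ⟨he, hie⟩ := hei
  have hped : ∀ x ∈ e, x ∈ comp E i := hpedge e he hie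
  have heE' : e ∈ E.filter fun e => ∀ x ∈ e, x ∈ comp E i := Finset.mem_filter.mpr ⟨he, hped⟩
  -- step 1 : replace linkGame by the game that only sees edges inside the component
  have hstep1 : shapley E (linkGame v) e
      = shapley E (fun L => linkGame v (L.filter fun e => ∀ x ∈ e, x ∈ comp E i)) e := by
    rw [shapley, shapley]
    apply Finset.sum_congr rfl
    intro L hL
    rw [Finset.mem_powerset] at hL
    have hLE : L ⊆ E := hL.trans (E.erase_subset e)
    have hLE' : insert e L ⊆ E := Finset.insert_subset he hLE
    have hsplit1 : linkGame v (insert e L)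
        = linkGame v ((insert e L).filter fun e => ∀ x ∈ e, x ∈ comp E i)
          + linkGame v ((insert e L).filter fun e => ∀ x ∈ e, ¬ x ∈ comp E i) :=
      pv_linkGame_split' v (fun x => x ∈ comp E i) _ _ _ (homogsub _ hLE')
        (fun e => Finset.mem_filter) (fun e => Finset.mem_filter)
    have hsplit2 : linkGame v L
        = linkGame v (L.filter fun e => ∀ x ∈ e, x ∈ comp E i)
          + linkGame v (L.filter fun e => ∀ x ∈ e, ¬ x ∈ comp E i) :=
      pv_linkGame_split' v (fun x => x ∈ comp E i) _ _ _ (homogsub _ hLE)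
        (fun e => Finset.mem_filter) (fun e => Finset.mem_filter)
    have hBsame : ((insert e L).filter fun e => ∀ x ∈ e, ¬ x ∈ comp E i)
        = L.filter fun e => ∀ x ∈ e, ¬ x ∈ comp E i := by
      rw [Finset.filter_insert, if_neg (fun h => (h i hie hicomp : False))]
    rw [hsplit1, hsplit2, hBsame]
    ring
  rw [hstep1]
  -- step 2 : remove the null players (edges outside the component)
  have hstep2 : shapley E (fun L => linkGame v (L.filter fun e => ∀ x ∈ e, x ∈ comp E i)) e
      = shapley (E.filter fun e => ∀ x ∈ e, x ∈ comp E i)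
          (fun L => linkGame v (L.filter fun e => ∀ x ∈ e, x ∈ comp E i)) e := by
    apply pv_shapley_null_subset ((E \ E.filter fun e => ∀ x ∈ e, x ∈ comp E i).card)
      E _ _ e rfl (Finset.filter_subset _ _) heE'
    intro p hp hp' L
    have hnp : ¬ ∀ x ∈ p, x ∈ comp E i := by
      intro h
      exact hp' (Finset.mem_filter.mpr ⟨hp, h⟩)
    rw [Finset.filter_insert, if_neg hnp]
  rw [hstep2]
  -- step 3 : inside the component the restricted game is the link game
  rw [shapley, shapley]
  apply Finset.sum_congr rfl
  intro L hL
  rw [Finset.mem_powerset] at hL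
  have hLE' : L ⊆ E.filter fun e => ∀ x ∈ e, x ∈ comp E i :=
    hL.trans (Finset.erase_subset _ _)
  have hall : ∀ e' ∈ L, ∀ x ∈ e', x ∈ comp E i :=
    fun e' he' => (Finset.mem_filter.mp (hLE' he')).2
  have hfl : L.filter (fun e => ∀ x ∈ e, x ∈ comp E i) = L :=
    Finset.filter_true_of_mem hall
  have hfl2 : (insert e L).filter (fun e => ∀ x ∈ e, x ∈ comp E i) = insert e L := by
    rw [Finset.filter_insert, if_pos hped, hfl]
  rw [hfl, hfl2]

end
end
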